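/- In every non-classical point-symmetric state space, T_1 = T_2 = T_3: the no-free-information principle holds. -/

import Mathlib

/-- An effect on a state space `S`. -/
def IsEffect {V : Type*} [AddCommGroup V] [Module ℝ V]
    (S : Set V) (e : V →ₗ[ℝ] ℝ) : Prop :=
  ∀ s ∈ S, 0 ≤ e s ∧ e s ≤ 1

/-- A bundled observable on the state space `S` with unit effect `u`. -/
structure GObs {V : Type*} [AddCommGroup V] [Module ℝ V]
    (S : Set V) (u : V →ₗ[ℝ] ℝ) where
  n : ℕ
  eff : Fin n → (V →ₗ[ℝ] ℝ)
  effect : ∀ i, IsEffect S (eff i)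
  sum_eq : ∑ i, eff i = u

variable {V : Type*} [AddCommGroup V] [Module ℝ V] {S : Set V} {u : V →ₗ[ℝ] ℝ}

/-- `A` is a post-processing of `B` (`B → A`, i.e. `A ∈ simu(B)`). -/
def GObs.PostProc (B A : GObs S u) : Prop :=
  ∃ ν : Fin B.n → Fin A.n → ℝ,
    (∀ x y, 0 ≤ ν x y) ∧ (∀ x, ∑ y, ν x y = 1) ∧
    ∀ y, A.eff y = ∑ x, ν x y • B.eff x

/-- Post-processing equivalence of observables. -/
def GObs.PPEquiv (B B' : GObs S u) : Prop :=
  B.PostProc B' ∧ B'.PostProc B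

/-- `A` can be simulated from the set of observables `𝓑` by mixing post-processings. -/
def GObs.Simulable (𝓑 : Set (GObs S u)) (A : GObs S u) : Prop :=
  ∃ (m : ℕ) (p : Fin m → ℝ) (B : Fin m → GObs S u)
    (ν : (i : Fin m) → Fin (B i).n → Fin A.n → ℝ),
    (∀ i, 0 ≤ p i) ∧ ∑ i, p i = 1 ∧ (∀ i, B i ∈ 𝓑) ∧
    (∀ i x y, 0 ≤ ν i x y) ∧ (∀ i x, ∑ y, ν i x y = 1) ∧
    ∀ y, A.eff y = ∑ i, p i • ∑ x, ν i x y • (B i).eff x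

/-- `B` is simulation irreducible: whenever `B` can be simulated from a set `𝓑`,
some member of `𝓑` is post-processing equivalent to `B`. -/
def GObs.SimIrr (B : GObs S u) : Prop :=
  ∀ 𝓑 : Set (GObs S u), GObs.Simulable 𝓑 B → ∃ B' ∈ 𝓑, B.PPEquiv B'

/-- Two observables are compatible if both are post-processings of a common
(joint) observable. -/
def GObs.Compatible (A B : GObs S u) : Prop :=
  ∃ G : GObs S u, G.PostProc A ∧ G.PostProc B

/-- Membership in `T₃`: compatibility with every observable. -/
def GObs.InT3 (T : GObs S u) : Prop :=
  ∀ A : GObs S u, T.Compatible A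

/-- A trivial observable (`T₁`): all effects proportional to `u` via a probability
distribution. -/
def GObs.Trivial (T : GObs S u) : Prop :=
  ∃ p : Fin T.n → ℝ, (∀ x, 0 ≤ p x) ∧ ∑ x, p x = 1 ∧ ∀ x, T.eff x = p x • u

/-- The effect space of `S`. -/
def EffectSet (S : Set V) : Set (V →ₗ[ℝ] ℝ) :=
  {e | IsEffect S e}

/-! Every extreme effect `e ∉ {0, u}` of a point-symmetric state space attains the values `0` and
`1`, and the reflection `s ↦ 2 • s₀ - s` exchanges the two, so `e s₀ = 1/2`. The same reflection
shows that every effect below `e` is a multiple of `e`. Hence a joint observable of `A` and the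
dichotomic observable `(e, u - e)` consists of multiples of `e` and of `u - e`, and every effect of
an observable compatible with everything lies in `span {u, e}`. Two extreme effects `e`, `f` with
`e ∉ {f, u - f}` are rigid enough to give `span {u, e} ⊓ span {u, f} = ℝ ∙ u`, so such an
observable is trivial. -/

open Set Submodule

section Algebraic

variable {s₀ : V} {e f g : V →ₗ[ℝ] ℝ}

theorem IsEffect.unit_sub (hu : ∀ s ∈ S, u s = 1) (he : IsEffect S e) : IsEffect S (u - e) :=
  fun s hs => by
    simp only [LinearMap.sub_apply, hu s hs]
    constructor <;> linarith [he s hs]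

theorem inv_smul_mem_effectSet {c : ℝ} (hc : 0 < c) (hg : ∀ s ∈ S, 0 ≤ g s ∧ g s ≤ c) :
    c⁻¹ • g ∈ EffectSet S := fun s hs => by
  simp only [LinearMap.smul_apply, smul_eq_mul]
  exact ⟨mul_nonneg (inv_nonneg.2 hc.le) (hg s hs).1, inv_mul_le_one_of_le₀ (hg s hs).2 hc.le⟩

theorem eq_zero_of_forall_apply_eq_zero (he : e ∈ extremePoints ℝ (EffectSet S))
    (hg : ∀ s ∈ S, g s = 0) : g = 0 := by
  have hmem : ∀ h : V →ₗ[ℝ] ℝ, (∀ s ∈ S, h s = e s) → h ∈ EffectSet S :=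
    fun h hh s hs => hh s hs ▸ he.1 s hs
  have := he.2 (hmem (e - g) fun s hs => by simp [hg s hs])
    (hmem (e + g) fun s hs => by simp [hg s hs])
    ⟨1 / 2, 1 / 2, by norm_num, by norm_num, by norm_num, by module⟩
  exact sub_eq_self.1 this

theorem eq_smul_of_mem_extremePoints (he : e ∈ extremePoints ℝ (EffectSet S)) {c : ℝ}
    (hc₀ : 0 ≤ c) (hc₁ : c ≤ 1) (hg : ∀ s ∈ S, 0 ≤ g s ∧ g s ≤ c)
    (heg : ∀ s ∈ S, 0 ≤ e s - g s ∧ e s - g s ≤ 1 - c) : g = c • e := by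
  rcases hc₀.eq_or_lt with rfl | hc₀
  · rw [zero_smul]
    exact eq_zero_of_forall_apply_eq_zero he fun s hs => le_antisymm (hg s hs).2 (hg s hs).1
  rcases hc₁.eq_or_lt with rfl | hc₁
  · have : e - g = 0 := eq_zero_of_forall_apply_eq_zero he fun s hs => by
      simp only [LinearMap.sub_apply]
      linarith [heg s hs]
    rw [one_smul, ← sub_eq_zero, ← neg_sub, this, neg_zero]
  have h₁ := inv_smul_mem_effectSet hc₀ hg
  have h₂ := inv_smul_mem_effectSet (g := e - g) (sub_pos.2 hc₁) (by simpa using heg)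
  have := he.2 h₁ h₂ ⟨c, 1 - c, hc₀, sub_pos.2 hc₁, by ring, by
    rw [smul_inv_smul₀ hc₀.ne', smul_inv_smul₀ (sub_pos.2 hc₁).ne', add_sub_cancel]⟩
  rw [← this, smul_inv_smul₀ hc₀.ne']

theorem unit_sub_mem_extremePoints (hu : ∀ s ∈ S, u s = 1)
    (he : e ∈ extremePoints ℝ (EffectSet S)) : u - e ∈ extremePoints ℝ (EffectSet S) := by
  refine ⟨he.1.unit_sub hu, fun x₁ hx₁ x₂ hx₂ ⟨a, b, ha, hb, hab, hx⟩ => ?_⟩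
  have := he.2 (IsEffect.unit_sub hu hx₁) (IsEffect.unit_sub hu hx₂) ⟨a, b, ha, hb, hab, by
    rw [smul_sub, smul_sub, sub_add_sub_comm, ← add_smul, hab, one_smul, hx, sub_sub_cancel]⟩
  rw [← this, sub_sub_cancel]

theorem apply_two_smul_sub (e : V →ₗ[ℝ] ℝ) (s₀ s : V) :
    e ((2 : ℝ) • s₀ - s) = 2 * e s₀ - e s := by
  simp only [map_sub, map_smul, smul_eq_mul]

/-- Indecomposability of the extreme effects on the hyperplane `e s₀ = 1/2`. -/
theorem eq_smul_of_forall_le (hs₀ : s₀ ∈ S) (hsym : ∀ s ∈ S, (2 : ℝ) • s₀ - s ∈ S)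
    (he : e ∈ extremePoints ℝ (EffectSet S)) (hhalf : e s₀ = 1 / 2)
    (hg : ∀ s ∈ S, 0 ≤ g s ∧ g s ≤ e s) : g = (2 * g s₀) • e := by
  refine eq_smul_of_mem_extremePoints he (by linarith [(hg s₀ hs₀).1])
    (by linarith [(hg s₀ hs₀).2]) (fun s hs => ⟨(hg s hs).1, ?_⟩)
    (fun s hs => ⟨by linarith [hg s hs], ?_⟩)
  · have := (hg _ (hsym s hs)).1
    rw [apply_two_smul_sub] at this
    linarith
  · have := (hg _ (hsym s hs)).2
    rw [apply_two_smul_sub, apply_two_smul_sub] at this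
    linarith

theorem eq_or_eq_unit_sub_of_eq_smul_add_smul (hu : ∀ s ∈ S, u s = 1) (hs₀ : s₀ ∈ S)
    (he : IsEffect S e) (hf : IsEffect S f) (he_half : e s₀ = 1 / 2) (hf_half : f s₀ = 1 / 2)
    {t t' : V} (ht : t ∈ S) (he_one : e t = 1) (ht' : t' ∈ S) (hf_one : f t' = 1)
    {L K : ℝ} (h : e = L • f + K • u) : e = f ∨ e = u - f := by
  have hev : ∀ s, e s = L * f s + K * u s := fun s => by simp [h]
  have h₀ := hev s₀
  have h₁ := hev t
  have h₂ := hev t'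
  rw [he_half, hf_half, hu s₀ hs₀] at h₀
  rw [he_one, hu t ht] at h₁
  rw [hf_one, hu t' ht'] at h₂
  have he_t' := he t' ht'
  have hf_t := hf t ht
  -- `h₂` and `he_t'` give `|L| ≤ 1`; `h₁` and `hf_t` give `|L| ≥ 1`.
  have hL : L = 1 ∨ L = -1 := by
    rcases le_or_gt 0 L with hL | hL
    · left; nlinarith
    · right; nlinarith
  rcases hL with rfl | rfl
  · left
    rw [h, show K = 0 by linarith, zero_smul, add_zero, one_smul]
  · right
    rw [h, show K = 1 by linarith]
    module

theorem mem_span_singleton_of_mem_span_pair (hu : ∀ s ∈ S, u s = 1) (hs₀ : s₀ ∈ S)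
    (he : IsEffect S e) (hf : IsEffect S f) (he_half : e s₀ = 1 / 2) (hf_half : f s₀ = 1 / 2)
    {t t' : V} (ht : t ∈ S) (he_one : e t = 1) (ht' : t' ∈ S) (hf_one : f t' = 1)
    (hef : e ≠ f) (hefu : e ≠ u - f) {x : V →ₗ[ℝ] ℝ}
    (hxe : x ∈ span ℝ {u, e}) (hxf : x ∈ span ℝ {u, f}) : x ∈ ℝ ∙ u := by
  obtain ⟨a, b, rfl⟩ := mem_span_pair.1 hxe
  obtain ⟨a', b', hx⟩ := mem_span_pair.1 hxf
  rcases eq_or_ne b 0 with rfl | hb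
  · simpa using smul_mem _ a (mem_span_singleton_self u)
  have hbe : b • e = b' • f + (a' - a) • u := by linear_combination (norm := module) -hx
  have : e = (b⁻¹ * b') • f + (b⁻¹ * (a' - a)) • u := by
    rw [mul_smul, mul_smul, ← smul_add, ← hbe, inv_smul_smul₀ hb]
  rcases eq_or_eq_unit_sub_of_eq_smul_add_smul hu hs₀ he hf he_half hf_half ht he_one ht' hf_one
    this with h | h
  exacts [absurd h hef, absurd h hefu]

abbrev GObs.binary (hu : ∀ s ∈ S, u s = 1) (he : IsEffect S e) : GObs S u where
  n := 2
  eff := ![e, u - e]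
  effect := Fin.forall_fin_two.2 ⟨he, he.unit_sub hu⟩
  sum_eq := by simp

theorem GObs.eff_mem_span_singleton (hs₀ : s₀ ∈ S) (hsym : ∀ s ∈ S, (2 : ℝ) • s₀ - s ∈ S)
    (he : e ∈ extremePoints ℝ (EffectSet S)) (hhalf : e s₀ = 1 / 2) (G : GObs S u)
    {c : Fin G.n → ℝ} (hc : ∀ x, 0 ≤ c x) (he_eq : e = ∑ x, c x • G.eff x) {x : Fin G.n}
    (hx : 0 < c x) : G.eff x ∈ ℝ ∙ e := by
  have hle : ∀ s ∈ S, 0 ≤ (c x • G.eff x) s ∧ (c x • G.eff x) s ≤ e s := by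
    intro s hs
    have hterm : ∀ x', 0 ≤ c x' * G.eff x' s := fun x' => mul_nonneg (hc x') (G.effect x' s hs).1
    simp only [he_eq, LinearMap.smul_apply, LinearMap.sum_apply, smul_eq_mul]
    exact ⟨hterm x, Finset.single_le_sum (fun x' _ => hterm x') (Finset.mem_univ x)⟩
  rw [← smul_mem_iff _ hx.ne', eq_smul_of_forall_le hs₀ hsym he hhalf hle]
  exact smul_mem _ _ (mem_span_singleton_self e)

theorem GObs.eff_mem_span_pair_of_compatible (hu : ∀ s ∈ S, u s = 1) (hs₀ : s₀ ∈ S)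
    (hsym : ∀ s ∈ S, (2 : ℝ) • s₀ - s ∈ S) (he : e ∈ extremePoints ℝ (EffectSet S))
    (hhalf : e s₀ = 1 / 2) {A : GObs S u} (hA : A.Compatible (GObs.binary hu he.1))
    (y : Fin A.n) : A.eff y ∈ span ℝ {u, e} := by
  obtain ⟨G, ⟨μ, -, -, hμ⟩, ⟨ν, hν, hν_sum, hν_eq⟩⟩ := hA
  have hG : ∀ x, G.eff x ∈ span ℝ {u, e} := by
    intro x
    have h01 : 0 < ν x 0 ∨ 0 < ν x 1 := by
      have := hν_sum x
      rw [Fin.sum_univ_two] at this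
      by_contra! h
      linarith [h.1.antisymm (hν x 0), h.2.antisymm (hν x 1)]
    have hu_mem : u ∈ span ℝ {u, e} := subset_span (by simp)
    have he_mem : e ∈ span ℝ {u, e} := subset_span (by simp)
    rcases h01 with h | h
    · exact (span_singleton_le_iff_mem _ _).2 he_mem
        (G.eff_mem_span_singleton hs₀ hsym he hhalf (fun x => hν x 0) (hν_eq 0) h)
    · have hhalf' : (u - e) s₀ = 1 / 2 := by
        rw [LinearMap.sub_apply, hu s₀ hs₀, hhalf]
        norm_num
      exact (span_singleton_le_iff_mem _ _).2 (sub_mem hu_mem he_mem)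
        (G.eff_mem_span_singleton hs₀ hsym (unit_sub_mem_extremePoints hu he) hhalf'
          (fun x => hν x 1) (hν_eq 1) h)
  rw [hμ y]
  exact sum_mem fun x _ => smul_mem _ _ (hG x)

theorem GObs.trivial_of_forall_mem_span_singleton (hu : ∀ s ∈ S, u s = 1) (hne : S.Nonempty)
    {A : GObs S u} (h : ∀ y, A.eff y ∈ ℝ ∙ u) : A.Trivial := by
  choose p hp using fun y => mem_span_singleton.1 (h y)
  obtain ⟨s, hs⟩ := hne
  have hval : ∀ y, A.eff y s = p y := fun y => by rw [← hp y]; simp [hu s hs]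
  refine ⟨p, fun y => hval y ▸ (A.effect y s hs).1, ?_, fun y => (hp y).symm⟩
  have := congrArg (· s) A.sum_eq
  simpa [hval, hu s hs] using this

end Algebraic

section Compact

variable {E : Type*} [NormedAddCommGroup E] [NormedSpace ℝ E] [FiniteDimensional ℝ E]
  {S : Set E} {u e : E →ₗ[ℝ] ℝ}

theorem exists_apply_eq_one (hne : S.Nonempty) (hS : IsCompact S)
    (he : e ∈ extremePoints ℝ (EffectSet S)) (he0 : e ≠ 0) : ∃ t ∈ S, e t = 1 := by
  obtain ⟨t, ht, hmax⟩ := hS.exists_isMaxOn hne e.continuous_of_finiteDimensional.continuousOn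
  refine ⟨t, ht, ?_⟩
  have := eq_smul_of_mem_extremePoints he (g := e) (he.1 t ht).1 (he.1 t ht).2
    (fun s hs => ⟨(he.1 s hs).1, hmax hs⟩) (fun s hs => by simp [(he.1 t ht).2])
  exact smul_left_injective ℝ he0 (by simpa using this.symm)

theorem apply_center_eq_half (hS : IsCompact S) (hu : ∀ s ∈ S, u s = 1) {s₀ : E} (hs₀ : s₀ ∈ S)
    (hsym : ∀ s ∈ S, (2 : ℝ) • s₀ - s ∈ S) (he : e ∈ extremePoints ℝ (EffectSet S))
    (he0 : e ≠ 0) (heu : e ≠ u) : e s₀ = 1 / 2 := by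
  obtain ⟨t, ht, het⟩ := exists_apply_eq_one ⟨s₀, hs₀⟩ hS he he0
  obtain ⟨t', ht', het'⟩ := exists_apply_eq_one ⟨s₀, hs₀⟩ hS (unit_sub_mem_extremePoints hu he)
    (sub_ne_zero.2 heu.symm)
  have h₁ := (he.1 _ (hsym t ht)).1
  have h₂ := (he.1 _ (hsym t' ht')).2
  rw [apply_two_smul_sub] at h₁ h₂
  rw [LinearMap.sub_apply, hu t' ht'] at het'
  linarith

end Compact

theorem pointSymmetric_noFreeInformation_general
    {V : Type*} [NormedAddCommGroup V] [NormedSpace ℝ V] [FiniteDimensional ℝ V]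
    (S : Set V) (hScpt : IsCompact S)
    (u : V →ₗ[ℝ] ℝ) (hu : ∀ s ∈ S, u s = 1)
    (s₀ : V) (hs₀ : s₀ ∈ S) (hsym : ∀ s ∈ S, (2 : ℝ) • s₀ - s ∈ S)
    (hnc : ∃ e f : V →ₗ[ℝ] ℝ,
      e ∈ Set.extremePoints ℝ (EffectSet S) ∧ f ∈ Set.extremePoints ℝ (EffectSet S) ∧
      e ≠ 0 ∧ e ≠ u ∧ f ≠ 0 ∧ f ≠ u ∧ e ≠ f ∧ e ≠ u - f) :
    ∀ A : GObs S u, A.InT3 → A.Trivial := by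
  intro A hA
  obtain ⟨e, f, he, hf, he0, heu, hf0, hfu, hef, hefu⟩ := hnc
  have he_half := apply_center_eq_half hScpt hu hs₀ hsym he he0 heu
  have hf_half := apply_center_eq_half hScpt hu hs₀ hsym hf hf0 hfu
  obtain ⟨te, hte, he_one⟩ := exists_apply_eq_one ⟨s₀, hs₀⟩ hScpt he he0
  obtain ⟨tf, htf, hf_one⟩ := exists_apply_eq_one ⟨s₀, hs₀⟩ hScpt hf hf0
  refine A.trivial_of_forall_mem_span_singleton hu ⟨s₀, hs₀⟩ fun y => ?_
  exact mem_span_singleton_of_mem_span_pair hu hs₀ he.1 hf.1 he_half hf_half hte he_one htf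
    hf_one hef hefu (A.eff_mem_span_pair_of_compatible hu hs₀ hsym he he_half (hA _) y)
    (A.eff_mem_span_pair_of_compatible hu hs₀ hsym hf hf_half (hA _) y)

/-- Corollary 3: in every non-classical point-symmetric state space,
`T₁ = T₂ = T₃`: the no-free-information principle holds, i.e. every observable
compatible with all observables is trivial.  Non-classicality is expressed by the
existence of two non-trivial extreme effects `e`, `f` with `e ≠ f` and `e ≠ u − f`. -/
theorem pointSymmetric_noFreeInformation
    {V : Type*} [NormedAddCommGroup V] [NormedSpace ℝ V] [FiniteDimensional ℝ V]
    (S : Set V) (hSne : S.Nonempty) (hScvx : Convex ℝ S) (hScpt : IsCompact S)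
    (u : V →ₗ[ℝ] ℝ) (hu : ∀ s ∈ S, u s = 1)
    (s₀ : V) (hs₀ : s₀ ∈ S) (hsym : ∀ s ∈ S, (2 : ℝ) • s₀ - s ∈ S)
    (hnc : ∃ e f : V →ₗ[ℝ] ℝ,
      e ∈ Set.extremePoints ℝ (EffectSet S) ∧ f ∈ Set.extremePoints ℝ (EffectSet S) ∧
      e ≠ 0 ∧ e ≠ u ∧ f ≠ 0 ∧ f ≠ u ∧ e ≠ f ∧ e ≠ u - f) :
    ∀ A : GObs S u, A.InT3 → A.Trivial :=
  pointSymmetric_noFreeInformation_general S hScpt u hu s₀ hs₀ hsym hnc
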